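/- Fix t ∈ [0,∞) and x ∈ ℝ^N. Let H(t,x,·) : ℝ^N → ℝ be a real-valued convex function, let U(t) be a nonempty subset of ℝ^M, let f(t,x,·) : ℝ^M → ℝ^N be such that f(t,x,U(t)) is closed and convex, and let l(t,x,·) : ℝ^M → ℝ. If H(t,x,p) = sup_{u∈U(t)} (⟨p,f(t,x,u)⟩ − l(t,x,u)) for all p ∈ ℝ^N and the set Γ(t,x) := {(f(t,x,u), l(t,x,u)+r) : u ∈ U(t), r ≥ 0} is closed and convex, then epi H*(t,x,·) = Γ(t,x). -/

import Mathlib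

open MeasureTheory Set Filter Topology

noncomputable section

namespace HJB

/-- `ℝ^n`. -/
abbrev Euc (n : ℕ) : Type := EuclideanSpace ℝ (Fin n)

/-! ### Legendre–Fenchel conjugate (in the last variable) -/

/-- The Legendre–Fenchel conjugate of a real-valued function on `ℝ^N`,
with values in `ℝ ∪ {±∞}` (it is never `⊥`). -/
def conj {N : ℕ} (h : Euc N → ℝ) (v : Euc N) : EReal :=
  ⨆ p : Euc N, (((inner ℝ v p : ℝ) - h p : ℝ) : EReal)

/-- The effective domain of the conjugate. -/
def domConj {N : ℕ} (h : Euc N → ℝ) : Set (Euc N) := {v | conj h v ≠ ⊤}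

/-- The epigraph of the conjugate. -/
def epiConj {N : ℕ} (h : Euc N → ℝ) : Set (Euc N × ℝ) :=
  {q | conj h q.1 ≤ (q.2 : EReal)}

/-- The graph of the conjugate. -/
def gphConj {N : ℕ} (h : Euc N → ℝ) : Set (Euc N × ℝ) :=
  {q | conj h q.1 = (q.2 : EReal)}

/-- `H*(t,x,v)`, the conjugate of a Hamiltonian in the last variable. -/
def Hstar {N : ℕ} (H : ℝ → Euc N → Euc N → ℝ) (t : ℝ) (x v : Euc N) : EReal :=
  conj (H t x) v

/-! ### Integrability classes -/

/-- `φ ∈ L¹([0,∞);ℝ)`. -/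
def MemL1 (φ : ℝ → ℝ) : Prop := IntegrableOn φ (Ici 0)

/-- `c ∈ L¹_loc([0,∞);[0,∞))`. -/
def MemL1loc (c : ℝ → ℝ) : Prop :=
  (∀ t, 0 ≤ c t) ∧ ∀ b : ℝ, IntegrableOn c (Icc 0 b)

/-- The class `𝓛_loc` : nonnegative, locally integrable on `[0,∞)`, with uniformly
small integrals over short subintervals. -/
def MemLloc (k : ℝ → ℝ) : Prop :=
  MemL1loc k ∧ ∀ ε > (0:ℝ), ∃ σ > (0:ℝ), ∀ a b : ℝ, 0 ≤ a → a ≤ b → b - a ≤ σ →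
    (∫ τ in a..b, k τ) ≤ ε

/-! ### Cones -/

/-- The Bouligand tangent cone `T_A(x) = {ζ : liminf_{τ→0+} dist(x+τζ,A)/τ = 0}`. -/
def tangentConeB {F : Type*} [NormedAddCommGroup F] [NormedSpace ℝ F]
    (A : Set F) (x : F) : Set F :=
  {ζ | ∀ ε > (0:ℝ), ∀ δ > (0:ℝ), ∃ τ : ℝ, 0 < τ ∧ τ < δ ∧
    Metric.infDist (x + τ • ζ) A ≤ ε * τ}

/-- The regular normal cone (polar of the tangent cone). -/
def regNormal {N : ℕ} (A : Set (Euc N)) (x : Euc N) : Set (Euc N) :=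
  {ξ | ∀ ζ ∈ tangentConeB A x, (inner ℝ ζ ξ : ℝ) ≤ 0}

/-- The limiting normal cone. -/
def limNormal {N : ℕ} (A : Set (Euc N)) (x : Euc N) : Set (Euc N) :=
  {ξ | ∃ xs ξs : ℕ → Euc N, (∀ n, xs n ∈ A ∧ ξs n ∈ regNormal A (xs n)) ∧
    Tendsto xs atTop (nhds x) ∧ Tendsto ξs atTop (nhds ξ)}

/-- The set `N¹_{y,η}` of unit vectors in closed convex hulls of limiting normal
cones at boundary points near `y`. -/
def N1set {N : ℕ} (A : Set (Euc N)) (y : Euc N) (η : ℝ) : Set (Euc N) :=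
  {n | ‖n‖ = 1 ∧ ∃ x ∈ frontier A ∩ Metric.closedBall y η,
    n ∈ closure (convexHull ℝ (limNormal A x))}

/-- The outward pointing condition (OPC) for a set-valued velocity map `FF`. -/
def OPC {N : ℕ} (A : Set (Euc N)) (FF : ℝ → Euc N → Set (Euc N)) : Prop :=
  ∃ η > (0:ℝ), ∃ r > (0:ℝ), ∃ Mc : ℝ, 0 ≤ Mc ∧
    ∀ᵐ t ∂(volume.restrict (Ici (0:ℝ))), ∀ y : Euc N,
      (∃ z ∈ frontier A, dist y z ≤ η) →
      ∀ v ∈ FF t y, (∀ ε > (0:ℝ), ∃ n ∈ N1set A y η, (inner ℝ n v : ℝ) ≤ ε) →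
        ∃ w ∈ FF t y, dist w v ≤ Mc ∧
          ∀ n ∈ N1set A y η, r ≤ (inner ℝ n w : ℝ) ∧ r ≤ (inner ℝ n (w - v) : ℝ)

/-- `(OPC)_H` : the OPC condition for `dom H*`. -/
def OPCH {N : ℕ} (H : ℝ → Euc N → Euc N → ℝ) (A : Set (Euc N)) : Prop :=
  OPC A (fun t y => domConj (H t y))

/-! ### Conditions (h)'' and (h)''_H -/

/-- The image set `(f,l)(t,x,U(t))`. -/
def flimg {N M : ℕ} (U : ℝ → Set (Euc M)) (f : ℝ → Euc N → Euc M → Euc N)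
    (l : ℝ → Euc N → Euc M → ℝ) (t : ℝ) (x : Euc N) : Set (Euc N × ℝ) :=
  (fun u => (f t x u, l t x u)) '' U t

/-- Condition (h)'' for a control triple `(U,f,l)`, a constraint set `A`, and
data functions `φ ∈ L¹`, `c ∈ L¹_loc`, `k, q ∈ 𝓛_loc`. -/
def Hpp {N M : ℕ} (U : ℝ → Set (Euc M)) (f : ℝ → Euc N → Euc M → Euc N)
    (l : ℝ → Euc N → Euc M → ℝ) (A : Set (Euc N)) (φ c k q : ℝ → ℝ) : Prop :=
  (∀ O : Set (Euc M), IsOpen O → MeasurableSet {t : ℝ | (U t ∩ O).Nonempty}) ∧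
  (∀ t, (U t).Nonempty ∧ IsClosed (U t)) ∧
  -- (h1)
  (∀ x u, Measurable fun t => f t x u) ∧
  (∀ x u, Measurable fun t => l t x u) ∧
  (∀ t, Continuous fun q : Euc N × Euc M => f t q.1 q.2) ∧
  (∀ t, Continuous fun q : Euc N × Euc M => l t q.1 q.2) ∧
  MemL1 φ ∧ (∀ t, 0 ≤ t → ∀ x u, φ t ≤ l t x u) ∧
  -- (h2)
  MemL1loc c ∧
  (∀ t, 0 ≤ t → ∀ x, ∀ u ∈ U t, ‖f t x u‖ + |l t x u| ≤ c t * (1 + ‖x‖)) ∧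
  -- (h3)
  (∀ t, 0 ≤ t → ∀ x, IsClosed (flimg U f l t x) ∧
    Tendsto (fun y => EMetric.hausdorffEdist (flimg U f l t y) (flimg U f l t x))
      (nhds x) (nhds 0)) ∧
  -- (h4)
  (∀ t, 0 ≤ t → ∀ x, Convex ℝ {y : Euc N × ℝ |
    ∃ u ∈ U t, ∃ r : ℝ, 0 ≤ r ∧ y = (f t x u, l t x u + r)}) ∧
  -- (h5)
  MemLloc q ∧
  (∀ t, 0 ≤ t → ∀ x ∈ frontier A, ∀ u ∈ U t, ‖f t x u‖ + |l t x u| ≤ q t) ∧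
  -- (h6)
  MemLloc k ∧
  (∀ t, 0 ≤ t → ∀ x y, ∀ u ∈ U t,
    ‖f t x u - f t y u‖ + |l t x u - l t y u| ≤ k t * ‖x - y‖)

/-- Condition (h)''_H for a Hamiltonian `H`, a constraint set `A`, a function `λ`,
and data functions `φ ∈ L¹`, `c ∈ L¹_loc`, `k, q ∈ 𝓛_loc`. -/
def HppH {N : ℕ} (H : ℝ → Euc N → Euc N → ℝ) (A : Set (Euc N))
    (lam : ℝ → Euc N → ℝ) (φ c k q : ℝ → ℝ) : Prop :=
  -- (H1)
  (∀ x p, Measurable fun t => H t x p) ∧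
  (∀ t p, Continuous fun x => H t x p) ∧
  (∀ t x, ConvexOn ℝ univ (H t x)) ∧
  -- (H2)
  MemL1 φ ∧ (∀ t, 0 ≤ t → ∀ x, H t x 0 ≤ -φ t) ∧
  -- regularity of λ and of the data
  (∀ t x, 0 ≤ lam t x) ∧
  (∀ x, Measurable fun t => lam t x) ∧
  (∀ t, Continuous fun x => lam t x) ∧
  MemL1loc c ∧ MemLloc k ∧ MemLloc q ∧
  -- (H3)
  (∀ t, 0 ≤ t → ∀ x, lam t x ≤ c t * (1 + ‖x‖)) ∧
  (∀ t, 0 ≤ t → ∀ x ∈ frontier A, lam t x ≤ q t) ∧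
  -- (H4)
  (∀ t, 0 ≤ t → ∀ x y, |lam t x - lam t y| ≤ k t * ‖x - y‖) ∧
  -- (H5)
  (∀ t, 0 ≤ t → ∀ x y p, |H t x p - H t y p| ≤ k t * (1 + ‖p‖) * ‖x - y‖) ∧
  -- (H6)
  (∀ t, 0 ≤ t → ∀ x p p', |H t x p - H t x p'| ≤ lam t x * ‖p - p'‖) ∧
  -- (H7)
  (∀ t, 0 ≤ t → ∀ x v, Hstar H t x v ≠ ⊤ → |(Hstar H t x v).toReal| ≤ lam t x)

/-! ### Trajectories and value functions -/

/-- `x` is locally absolutely continuous on `[t₀,∞)` with a.e. derivative `dx`. -/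
def IsTrajOn {N : ℕ} (x dx : ℝ → Euc N) (t₀ : ℝ) : Prop :=
  (∀ b : ℝ, IntegrableOn dx (Icc t₀ b)) ∧
  ∀ t, t₀ ≤ t → x t = x t₀ + ∫ s in t₀..t, dx s

/-- `S_H(t₀,x₀)` : admissible pairs (trajectory, a.e. derivative) for the
calculus-of-variations problem with constraint set `A`. -/
def SH {N : ℕ} (H : ℝ → Euc N → Euc N → ℝ) (A : Set (Euc N)) (t₀ : ℝ)
    (x₀ : Euc N) : Set ((ℝ → Euc N) × (ℝ → Euc N)) :=
  {p | IsTrajOn p.1 p.2 t₀ ∧ p.1 t₀ = x₀ ∧ (∀ t, t₀ ≤ t → p.1 t ∈ A) ∧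
    ∀ᵐ t ∂(volume.restrict (Ici t₀)), Hstar H t (p.1 t) (p.2 t) ≠ ⊤}

open Classical in
/-- The cost `∫_{t₀}^∞ H*(t,x(t),ẋ(t)) dt ∈ ℝ ∪ {+∞}` of a trajectory. -/
def trajCost {N : ℕ} (H : ℝ → Euc N → Euc N → ℝ) (t₀ : ℝ)
    (p : (ℝ → Euc N) × (ℝ → Euc N)) : EReal :=
  if (∀ᵐ t ∂(volume.restrict (Ici t₀)), Hstar H t (p.1 t) (p.2 t) ≠ ⊤) ∧
     IntegrableOn (fun t => (Hstar H t (p.1 t) (p.2 t)).toReal) (Ici t₀)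
  then (((∫ t in Ici t₀, (Hstar H t (p.1 t) (p.2 t)).toReal) : ℝ) : EReal)
  else ⊤

/-- The value function `V` of the calculus-of-variations problem. -/
def valueV {N : ℕ} (H : ℝ → Euc N → Euc N → ℝ) (A : Set (Euc N)) (t₀ : ℝ)
    (x₀ : Euc N) : EReal :=
  sInf (trajCost H t₀ '' SH H A t₀ x₀)

/-- `S_f(t₀,x₀)` : admissible trajectory-control pairs of the control system. -/
def Sf {N M : ℕ} (U : ℝ → Set (Euc M)) (f : ℝ → Euc N → Euc M → Euc N)
    (A : Set (Euc N)) (t₀ : ℝ) (x₀ : Euc N) :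
    Set ((ℝ → Euc N) × (ℝ → Euc M)) :=
  {p | Measurable p.2 ∧ (∀ᵐ t ∂(volume.restrict (Ici t₀)), p.2 t ∈ U t) ∧
    (∀ b : ℝ, IntegrableOn (fun s => f s (p.1 s) (p.2 s)) (Icc t₀ b)) ∧
    p.1 t₀ = x₀ ∧ (∀ t, t₀ ≤ t → p.1 t ∈ A) ∧
    ∀ t, t₀ ≤ t → p.1 t = x₀ + ∫ s in t₀..t, f s (p.1 s) (p.2 s)}

open Classical in
/-- The cost `∫_{t₀}^∞ l(t,x(t),u(t)) dt ∈ ℝ ∪ {+∞}` of a trajectory-control pair. -/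
def ctrlCost {N M : ℕ} (l : ℝ → Euc N → Euc M → ℝ) (t₀ : ℝ)
    (p : (ℝ → Euc N) × (ℝ → Euc M)) : EReal :=
  if IntegrableOn (fun t => l t (p.1 t) (p.2 t)) (Ici t₀)
  then (((∫ t in Ici t₀, l t (p.1 t) (p.2 t)) : ℝ) : EReal)
  else ⊤

/-- The value function `𝒱` of the optimal control problem. -/
def valueVc {N M : ℕ} (U : ℝ → Set (Euc M)) (f : ℝ → Euc N → Euc M → Euc N)
    (l : ℝ → Euc N → Euc M → ℝ) (A : Set (Euc N)) (t₀ : ℝ) (x₀ : Euc N) : EReal :=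
  sInf (ctrlCost l t₀ '' Sf U f A t₀ x₀)

/-! ### Conditions (B), (B)_H, (LB), (VIC) -/

/-- Condition `(B)_H`. -/
def CondBH {N : ℕ} (H : ℝ → Euc N → Euc N → ℝ) (A : Set (Euc N)) : Prop :=
  (∃ t₀ ≥ (0:ℝ), ∃ x₀ ∈ A, valueV H A t₀ x₀ ≠ ⊤) ∧
  ∃ T > (0:ℝ), ∃ ψ : ℝ → ℝ, (∀ t, 0 ≤ ψ t) ∧ IntegrableOn ψ (Ici T) ∧
    ∀ t₀, T ≤ t₀ → ∀ x₀ ∈ A, valueV H A t₀ x₀ ≠ ⊤ →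
      ∀ p ∈ SH H A t₀ x₀,
        ∀ᵐ t ∂(volume.restrict (Ici t₀)), |(Hstar H t (p.1 t) (p.2 t)).toReal| ≤ ψ t

/-- Condition `(B)`. -/
def CondB {N M : ℕ} (U : ℝ → Set (Euc M)) (f : ℝ → Euc N → Euc M → Euc N)
    (l : ℝ → Euc N → Euc M → ℝ) (A : Set (Euc N)) (T : ℝ) (ψ : ℝ → ℝ) : Prop :=
  (∃ t₀ ≥ (0:ℝ), ∃ x₀ ∈ A, valueVc U f l A t₀ x₀ ≠ ⊤) ∧
  0 < T ∧ (∀ t, 0 ≤ ψ t) ∧ IntegrableOn ψ (Ici T) ∧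
    ∀ t₀, T ≤ t₀ → ∀ x₀ ∈ A, valueVc U f l A t₀ x₀ ≠ ⊤ →
      ∀ p ∈ Sf U f A t₀ x₀,
        ∀ᵐ t ∂(volume.restrict (Ici t₀)), |l t (p.1 t) (p.2 t)| ≤ ψ t

/-- Condition (LB), with the family `ψ r` of integrable bounds. -/
def CondLB {N M : ℕ} (U : ℝ → Set (Euc M)) (f : ℝ → Euc N → Euc M → Euc N)
    (l : ℝ → Euc N → Euc M → ℝ) (A : Set (Euc N)) (ψ : ℝ → ℝ → ℝ) : Prop :=
  ∀ r, 0 < r → (∀ t, 0 ≤ ψ r t) ∧ IntegrableOn (ψ r) (Ici 0) ∧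
    ∀ t₀, 0 ≤ t₀ → ∀ x₀ ∈ A, ‖x₀‖ ≤ r → ∀ p ∈ Sf U f A t₀ x₀,
      ∀ᵐ t ∂(volume.restrict (Ici t₀)), |l t (p.1 t) (p.2 t)| ≤ ψ r t

/-- Condition `(VIC)_H`. -/
def VICH {N : ℕ} (H : ℝ → Euc N → Euc N → ℝ) (A : Set (Euc N)) : Prop :=
  ∃ C : Set ℝ, C ⊆ Ioi 0 ∧ volume (Ioi 0 \ C) = 0 ∧
    ∀ t ∈ C, ∀ x ∈ A,
      (∃ v, Hstar H t x v ≠ ⊤ ∧ v ∈ tangentConeB A x) ∧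
      ∀ v, Hstar H t x v ≠ ⊤ → -v ∈ tangentConeB A x

/-- Condition (VIC) for a dynamics `f` with controls `U`. -/
def VICf {N M : ℕ} (U : ℝ → Set (Euc M)) (f : ℝ → Euc N → Euc M → Euc N)
    (A : Set (Euc N)) : Prop :=
  ∃ C : Set ℝ, C ⊆ Ioi 0 ∧ volume (Ioi 0 \ C) = 0 ∧
    ∀ t ∈ C, ∀ x ∈ A,
      (∃ u ∈ U t, f t x u ∈ tangentConeB A x) ∧
      ∀ u ∈ U t, -(f t x u) ∈ tangentConeB A x

/-! ### Weak solutions -/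

/-- The time–state–value space `ℝ × ℝ^N × ℝ`. -/
abbrev TXR (N : ℕ) : Type := ℝ × Euc N × ℝ

/-- The natural pairing on `ℝ × ℝ^N × ℝ`. -/
def pairTX {N : ℕ} (p q : TXR N) : ℝ :=
  p.1 * q.1 + (inner ℝ p.2.1 q.2.1 : ℝ) + p.2.2 * q.2.2

/-- The regular normal cone in `ℝ × ℝ^N × ℝ` (polar of the tangent cone). -/
def regNormalTX {N : ℕ} (S : Set (TXR N)) (z : TXR N) : Set (TXR N) :=
  {ξ | ∀ ζ ∈ tangentConeB S z, pairTX ζ ξ ≤ 0}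

/-- The epigraph of an extended-real function of `(t,x)`. -/
def epiTX {N : ℕ} (W : ℝ → Euc N → EReal) : Set (TXR N) :=
  {z | W z.1 z.2.1 ≤ (z.2.2 : EReal)}

/-- The epigraph of `W(t,·)`. -/
def epiX {N : ℕ} (W : ℝ → Euc N → EReal) (t : ℝ) : Set (Euc N × ℝ) :=
  {q | W t q.1 ≤ (q.2 : EReal)}

/-- The Fréchet subdifferential of `W` at `(t,x)` (only meaningful when `W t x` is finite). -/
def frSubdiff {N : ℕ} (W : ℝ → Euc N → EReal) (t : ℝ) (x : Euc N) :
    Set (ℝ × Euc N) :=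
  {p | ∀ ε > (0:ℝ), ∃ δ > (0:ℝ), ∀ s : ℝ, ∀ y : Euc N,
    dist ((s, y) : ℝ × Euc N) (t, x) < δ →
    ((((W t x).toReal + p.1 * (s - t) + (inner ℝ p.2 (y - x) : ℝ)
      - ε * dist ((s, y) : ℝ × Euc N) (t, x)) : ℝ) : EReal) ≤ W s y}

/-- A lower semicontinuous `W : [0,∞) × A → ℝ ∪ {+∞}` is a weak solution of
`-W_t + H(t,x,-W_x) = 0` on `(0,∞) × A`. -/
def IsWeakSolution {N : ℕ} (H : ℝ → Euc N → Euc N → ℝ) (A : Set (Euc N))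
    (W : ℝ → Euc N → EReal) : Prop :=
  ∃ C : Set ℝ, C ⊆ Ioi 0 ∧ volume (Ioi 0 \ C) = 0 ∧
    (∀ t ∈ C, ∀ x ∈ frontier A, W t x ≠ ⊤ →
      (∀ p ∈ frSubdiff W t x, 0 ≤ -p.1 + H t x (-p.2)) ∧
      (∀ pt : ℝ, ∀ px : Euc N,
        ((pt, px, (0:ℝ)) : TXR N) ∈ regNormalTX (epiTX W) (t, x, (W t x).toReal) →
        ∀ ε > (0:ℝ), ∃ v : Euc N, Hstar H t x v ≠ ⊤ ∧ pt - ε ≤ (inner ℝ v (-px) : ℝ))) ∧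
    (∀ t ∈ C, ∀ x ∈ interior A, W t x ≠ ⊤ →
      (∀ p ∈ frSubdiff W t x, -p.1 + H t x (-p.2) = 0) ∧
      (∀ pt : ℝ, ∀ px : Euc N,
        ((pt, px, (0:ℝ)) : TXR N) ∈ regNormalTX (epiTX W) (t, x, (W t x).toReal) →
        IsLUB {r : ℝ | ∃ v : Euc N, Hstar H t x v ≠ ⊤ ∧ r = (inner ℝ v (-px) : ℝ)} pt))

/-- Local absolute continuity of a set-valued map `t ⇝ P(t)` with nonempty closed
values. -/
def LocAbsCont {F : Type*} [MetricSpace F] (P : ℝ → Set F) : Prop :=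
  (∀ t, 0 ≤ t → (P t).Nonempty ∧ IsClosed (P t)) ∧
  ∀ S T : ℝ, 0 ≤ S → S ≤ T → ∀ ε > (0:ℝ), ∀ K : Set F, IsCompact K →
    ∃ δ > (0:ℝ), ∀ m : ℕ, ∀ s t : ℕ → ℝ,
      (∀ i, i < m → S ≤ s i ∧ s i < t i ∧ t i ≤ T) →
      (∀ i, i + 1 < m → t i ≤ s (i + 1)) →
      (∑ i ∈ Finset.range m, (t i - s i)) < δ →
      ∃ e : ℕ → ℝ,
        (∀ i, i < m → 0 ≤ e i ∧
          (P (t i) ∩ K ⊆ {y | ∃ z ∈ P (s i), dist y z ≤ e i}) ∧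
          (P (s i) ∩ K ⊆ {y | ∃ z ∈ P (t i), dist y z ≤ e i})) ∧
        (∑ i ∈ Finset.range m, e i) < ε

/-! ### The class 𝓗 -/

/-- The rescaled Hamiltonian `IH(t,x,p) := θ(t)⁻¹ H(t,x,θ(t)p)`. -/
def IHam {N : ℕ} (H : ℝ → Euc N → Euc N → ℝ) (θ : ℝ → ℝ) :
    ℝ → Euc N → Euc N → ℝ :=
  fun t x p => (θ t)⁻¹ * H t x (θ t • p)

/-- The `L^∞([0,∞))` norm. -/
def supNormInfty (θ : ℝ → ℝ) : ℝ :=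
  (essSup (fun t => ENNReal.ofReal |θ t|) (volume.restrict (Ici (0:ℝ)))).toReal


/-- The class `𝓗(θ,λ,{ψ_r},φ,c,A)`. -/
def ClassH {N : ℕ} (H : ℝ → Euc N → Euc N → ℝ) (θ : ℝ → ℝ)
    (lam : ℝ → Euc N → ℝ) (ψ : ℝ → ℝ → ℝ) (φ c : ℝ → ℝ) (A : Set (Euc N)) : Prop :=
  (∀ t, 0 < θ t) ∧ Measurable θ ∧
  essSup (fun t => ENNReal.ofReal |θ t|) (volume.restrict (Ici (0:ℝ))) ≠ ⊤ ∧
  (∀ r, 0 < r → (∀ t, 0 ≤ ψ r t) ∧ IntegrableOn (ψ r) (Ici 0)) ∧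
  (∃ k q : ℝ → ℝ, HppH (IHam H θ) A lam φ c k q) ∧
  ∀ r, 0 < r → ∀ t₀, 0 ≤ t₀ → ∀ x₀ ∈ A, ‖x₀‖ ≤ r →
    ∀ p ∈ SH (IHam H θ) A t₀ x₀,
      ∀ᵐ t ∂(volume.restrict (Ici t₀)), θ t * lam t (p.1 t) ≤ ψ r t

/-! A point `(v, s)` outside the closed convex set `Γ` is strictly separated from it by a
hyperplane `⟪q, y⟫ + a w = c`; since `Γ` is closed upwards in `w`, `a ≥ 0`. If `a > 0` the
hyperplane is the graph of an affine function `w = ⟪p, y⟫ - b` lying below `Γ`, and `h p ≤ b`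
by the representation formula, whence `⟪v, p⟫ - h p > s`, i.e. `(v, s)` is not in the epigraph
of `h*`. If the hyperplane is vertical (`a = 0`), tilting the affine minorant `-h 0` of `Γ` by a
large multiple of `q` produces such a `p` all the same. -/

theorem nonneg_of_forall_lt_add_mul {E : Type*} {Γ : Set (E × ℝ)} (hne : Γ.Nonempty)
    (hup : ∀ y ∈ Γ, ∀ r : ℝ, 0 ≤ r → (y.1, y.2 + r) ∈ Γ) {φ : E → ℝ} {a c : ℝ}
    (hsep : ∀ y ∈ Γ, c < φ y.1 + a * y.2) : 0 ≤ a := by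
  by_contra! ha
  obtain ⟨y, hy⟩ := hne
  have := hsep _ (hup y hy ((c - φ y.1 - a * y.2) / a) ?_)
  · simp only [mul_add, mul_div_cancel₀ _ ha.ne] at this
    linarith
  · exact div_nonneg_of_nonpos (by linarith [hsep y hy]) ha.le

section Separation

open scoped RealInnerProductSpace

variable {E : Type*} [NormedAddCommGroup E] [InnerProductSpace ℝ E] [CompleteSpace E]

theorem exists_inner_add_mul_separation {Γ : Set (E × ℝ)}
    (hcl : IsClosed Γ) (hcv : Convex ℝ Γ) {z : E × ℝ} (hz : z ∉ Γ) :
    ∃ (q : E) (a c : ℝ), ⟪q, z.1⟫ + a * z.2 < c ∧ ∀ y ∈ Γ, c < ⟪q, y.1⟫ + a * y.2 := by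
  obtain ⟨g, c, hgz, hgΓ⟩ := geometric_hahn_banach_point_closed hcv hcl hz
  set q := (InnerProductSpace.toDual ℝ E).symm (g.comp (ContinuousLinearMap.inl ℝ E ℝ))
  have hg : ∀ y : E × ℝ, g y = ⟪q, y.1⟫ + g (0, 1) * y.2 := fun y => by
    have : y = (y.1, 0) + y.2 • ((0 : E), (1 : ℝ)) := by simp
    rw [InnerProductSpace.toDual_symm_apply, this, map_add, map_smul]
    simp [mul_comm]
  exact ⟨q, g (0, 1), c, hg z ▸ hgz, fun y hy => hg y ▸ hgΓ y hy⟩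

theorem exists_affine_minorant_separation {Γ : Set (E × ℝ)} (hcl : IsClosed Γ)
    (hcv : Convex ℝ Γ) (hne : Γ.Nonempty) (hup : ∀ y ∈ Γ, ∀ r : ℝ, 0 ≤ r → (y.1, y.2 + r) ∈ Γ)
    {p₀ : E} {b₀ : ℝ} (hmin : ∀ y ∈ Γ, ⟪p₀, y.1⟫ - y.2 ≤ b₀) {v : E} {s : ℝ}
    (hvs : (v, s) ∉ Γ) :
    ∃ (p : E) (b : ℝ), (∀ y ∈ Γ, ⟪p, y.1⟫ - y.2 ≤ b) ∧ s < ⟪p, v⟫ - b := by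
  obtain ⟨q, a, c, hv, hΓ⟩ := exists_inner_add_mul_separation hcl hcv hvs
  rcases (nonneg_of_forall_lt_add_mul hne hup hΓ).lt_or_eq with ha | rfl
  · have hinner (y : E × ℝ) : ⟪-a⁻¹ • q, y.1⟫ - y.2 = -a⁻¹ * (⟪q, y.1⟫ + a * y.2) := by
      rw [real_inner_smul_left]
      field_simp
      ring
    refine ⟨-a⁻¹ • q, -a⁻¹ * c, fun y hy => ?_, ?_⟩
    · rw [hinner]
      exact mul_le_mul_of_nonpos_left (hΓ y hy).le (by simp [ha.le])
    · have := mul_pos (inv_pos.2 ha) (sub_pos.2 hv)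
      linarith [hinner (v, s)]
  · simp only [zero_mul, add_zero] at hv hΓ
    set t := max 0 ((s - ⟪p₀, v⟫ + b₀ + 1) / (c - ⟪q, v⟫))
    have ht : s - ⟪p₀, v⟫ + b₀ + 1 ≤ t * (c - ⟪q, v⟫) :=
      (div_le_iff₀ (by linarith)).mp (le_max_right _ _)
    refine ⟨p₀ - t • q, b₀ - t * c, fun y hy => ?_, ?_⟩
    · have := mul_le_mul_of_nonneg_left (hΓ y hy).le (le_max_left 0 _ : (0 : ℝ) ≤ t)
      rw [inner_sub_left, real_inner_smul_left]
      linarith [hmin y hy]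
    · rw [inner_sub_left, real_inner_smul_left]
      linarith

end Separation

theorem conj_le_coe_iff {N : ℕ} {h : Euc N → ℝ} {v : Euc N} {s : ℝ} :
    conj h v ≤ s ↔ ∀ p, inner ℝ v p - h p ≤ s := by
  simp only [conj, iSup_le_iff, EReal.coe_le_coe_iff]

theorem stmt_1_general {N M : ℕ} (h : Euc N → ℝ)
    (U : Set (Euc M)) (hU : U.Nonempty)
    (f : Euc M → Euc N) (l : Euc M → ℝ)
    (hrep : ∀ p : Euc N,
      IsLUB {r : ℝ | ∃ u ∈ U, r = (inner ℝ p (f u) : ℝ) - l u} (h p))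
    (Γ : Set (Euc N × ℝ))
    (hΓ : Γ = {y : Euc N × ℝ | ∃ u ∈ U, ∃ r : ℝ, 0 ≤ r ∧ y = (f u, l u + r)})
    (hΓcl : IsClosed Γ) (hΓcv : Convex ℝ Γ) :
    epiConj h = Γ := by
  have hmem : ∀ {y}, y ∈ Γ ↔ ∃ u ∈ U, ∃ r : ℝ, 0 ≤ r ∧ y = (f u, l u + r) := hΓ ▸ Iff.rfl
  have hbound : ∀ p, ∀ y ∈ Γ, inner ℝ p y.1 - y.2 ≤ h p := by
    intro p y hy
    obtain ⟨u, hu, r, hr, rfl⟩ := hmem.1 hy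
    linarith [(hrep p).1 ⟨u, hu, rfl⟩]
  ext ⟨v, s⟩
  refine ⟨fun hvs => ?_, fun hvs => conj_le_coe_iff.mpr fun p => ?_⟩
  · by_contra hn
    have hne : Γ.Nonempty := hU.elim fun u hu => ⟨_, hmem.2 ⟨u, hu, 0, le_rfl, rfl⟩⟩
    have hup : ∀ y ∈ Γ, ∀ r : ℝ, 0 ≤ r → (y.1, y.2 + r) ∈ Γ := by
      intro y hy r' hr'
      obtain ⟨u, hu, r, hr, rfl⟩ := hmem.1 hy
      exact hmem.2 ⟨u, hu, r + r', by positivity, by simp [add_assoc]⟩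
    obtain ⟨p, b, hb, hsb⟩ :=
      exists_affine_minorant_separation hΓcl hΓcv hne hup (hbound 0) hn
    have hpb : h p ≤ b := (hrep p).2 fun _ ⟨u, hu, hr⟩ =>
      hr ▸ by simpa using hb _ (hmem.2 ⟨u, hu, 0, le_rfl, rfl⟩)
    linarith [conj_le_coe_iff.mp hvs p, real_inner_comm v p]
  · linarith [hbound p _ hvs, real_inner_comm v p]

/-- Lemma `rep-epi`. If `(U,f,l)` is a representation of the
real-valued convex function `h = H(t,x,·)`, `f(t,x,U(t))` is closed and convex, and
`Γ = {(f(u), l(u)+r) : u ∈ U, r ≥ 0}` is closed and convex, then `epi H*(t,x,·) = Γ`. -/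
theorem stmt_1 {N M : ℕ} (h : Euc N → ℝ) (hconv : ConvexOn ℝ univ h)
    (U : Set (Euc M)) (hU : U.Nonempty)
    (f : Euc M → Euc N) (l : Euc M → ℝ)
    (hcl : IsClosed (f '' U)) (hcv : Convex ℝ (f '' U))
    (hrep : ∀ p : Euc N,
      IsLUB {r : ℝ | ∃ u ∈ U, r = (inner ℝ p (f u) : ℝ) - l u} (h p))
    (Γ : Set (Euc N × ℝ))
    (hΓ : Γ = {y : Euc N × ℝ | ∃ u ∈ U, ∃ r : ℝ, 0 ≤ r ∧ y = (f u, l u + r)})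
    (hΓcl : IsClosed Γ) (hΓcv : Convex ℝ Γ) :
    epiConj h = Γ :=
  stmt_1_general h U hU f l hrep Γ hΓ hΓcl hΓcv

end HJB
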